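/- arXiv:1503.03142 — 3 statements merged into one kernel-verified Lean document; each statement's English description precedes it below -/
import Mathlib

section
/- Let X, H be nonempty closed convex subsets of ℝⁿ with X ∩ H nonempty, and let x ∈ X. If P_X(P_H(x)) = x, then x ∈ H. -/
open InnerProductSpace

private lemma var_ineq {n : ℕ} {K : Set (EuclideanSpace ℝ (Fin n))}
    (hK : Convex ℝ K) {u y : EuclideanSpace ℝ (Fin n)} (hy : y ∈ K)
    (hmin : ∀ w ∈ K, ‖u - y‖ ≤ ‖u - w‖) :
    ∀ w ∈ K, ⟪u - y, w - y⟫_ℝ ≤ 0 := by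
  have hne : Nonempty K := ⟨⟨y, hy⟩⟩
  have : ‖u - y‖ = ⨅ w : K, ‖u - w‖ := by
    apply le_antisymm
    · exact le_ciInf fun w => hmin w w.2
    · exact ciInf_le ⟨0, fun r ⟨w, hw⟩ => hw ▸ norm_nonneg _⟩ (⟨y, hy⟩ : K)
  exact (norm_eq_iInf_iff_real_inner_le_zero hK hy).mp this

/-- If `x ∈ X` is a fixed point of `P_X ∘ P_H`, then `x ∈ H`. -/
theorem fixedPoint_proj_comp_mem
    (n : ℕ) (X H : Set (EuclideanSpace ℝ (Fin n)))
    (hXne : X.Nonempty) (hXcl : IsClosed X) (hXconv : Convex ℝ X)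
    (hHne : H.Nonempty) (hHcl : IsClosed H) (hHconv : Convex ℝ H)
    (hXH : (X ∩ H).Nonempty)
    (PX PH : EuclideanSpace ℝ (Fin n) → EuclideanSpace ℝ (Fin n))
    (hPX : ∀ x, PX x ∈ X ∧ ∀ y ∈ X, ‖x - PX x‖ ≤ ‖x - y‖)
    (hPH : ∀ x, PH x ∈ H ∧ ∀ y ∈ H, ‖x - PH x‖ ≤ ‖x - y‖)
    (x : EuclideanSpace ℝ (Fin n)) (hx : x ∈ X)
    (hfix : PX (PH x) = x) :
    x ∈ H := by
  obtain ⟨z, hzX, hzH⟩ := hXH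
  set h := PH x with hh
  have hhH : h ∈ H := (hPH x).1
  have h1 : ⟪h - x, z - x⟫_ℝ ≤ 0 := by
    have := var_ineq hXconv hx (fun w hw => by
      have := (hPX h).2 w hw
      rwa [hfix] at this) z hzX
    simpa using this
  have h2 : ⟪x - h, z - h⟫_ℝ ≤ 0 :=
    var_ineq hHconv hhH (fun w hw => (hPH x).2 w hw) z hzH
  have key : ‖h - x‖ ^ 2 ≤ 0 := by
    have e : ⟪h - x, z - x⟫_ℝ + ⟪x - h, z - h⟫_ℝ = ‖h - x‖ ^ 2 := by
      have hs := real_inner_self_eq_norm_sq (h - x)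
      have c1 := real_inner_comm x h
      simp only [inner_sub_left, inner_sub_right] at hs ⊢
      linarith
    linarith [e ▸ add_nonpos h1 h2]
  have : h = x := by
    have : ‖h - x‖ = 0 := by nlinarith [norm_nonneg (h - x)]
    have := norm_sub_eq_zero_iff.mp this
    exact this
  rwa [← this]
end

section
/- Let A : ℝⁿ → ℝⁿ be continuous and monotone, B : ℝⁿ → 2^{ℝⁿ} maximal monotone, β > 0, δ ∈ (0,1), θ ∈ (0,1), and let x ∈ ℝⁿ with x ≠ J(x) := (I + βB)^{-1}((I − βA)(x)). Suppose for every j ≥ 0 a point u_j ∈ B(θ^j J(x) + (1 − θ^j)x) is chosen with {u_j} bounded. Then there exists j ≥ 0 such that ⟨A(θ^j J(x) + (1 − θ^j)x) + u_j, x − J(x)⟩ ≥ (δ/β)‖x − J(x)‖². (The Armijo-type linesearch terminates finitely.) -/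
open InnerProductSpace Filter Topology

def MonotoneMap {n : ℕ} (A : EuclideanSpace ℝ (Fin n) → EuclideanSpace ℝ (Fin n)) : Prop :=
  ∀ x y, 0 ≤ ⟪x - y, A x - A y⟫_ℝ

def MonotoneOp {n : ℕ} (T : EuclideanSpace ℝ (Fin n) → Set (EuclideanSpace ℝ (Fin n))) : Prop :=
  ∀ x y u v, u ∈ T x → v ∈ T y → 0 ≤ ⟪x - y, u - v⟫_ℝ

def MaximalMonotoneOp {n : ℕ}
    (T : EuclideanSpace ℝ (Fin n) → Set (EuclideanSpace ℝ (Fin n))) : Prop :=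
  MonotoneOp T ∧
    ∀ x u, (∀ y v, v ∈ T y → 0 ≤ ⟪x - y, u - v⟫_ℝ) → u ∈ T x

/-!
Suppose the linesearch never stops. The trial points `θ ^ j • Jx + (1 - θ ^ j) • x` tend to `x`,
so along a subsequence `u j` converges to some `w`, which lies in `B x` because the graph of a
maximal monotone operator is closed. Passing to the limit in the failed tests gives
`⟪A x + w, x - Jx⟫ ≤ (δ / β) ‖x - Jx‖²`. On the other hand, the resolvent equation says
`β⁻¹ (x - Jx) - A x ∈ B Jx`, and monotonicity of `B` between `x` and `Jx` yields
`⟪A x + w, x - Jx⟫ ≥ β⁻¹ ‖x - Jx‖²`, which contradicts `δ < 1` and `x ≠ Jx`.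
-/

section

variable {n : ℕ}

local notation "E" => EuclideanSpace ℝ (Fin n)

theorem MaximalMonotoneOp.mem_of_tendsto {B : E → Set E} (hB : MaximalMonotoneOp B)
    {ι : Type*} {l : Filter ι} [l.NeBot] {p u : ι → E} {x w : E}
    (hp : Tendsto p l (𝓝 x)) (hu : Tendsto u l (𝓝 w)) (hmem : ∀ i, u i ∈ B (p i)) :
    w ∈ B x := by
  refine hB.2 x w fun y v hv => ?_
  have hlim : Tendsto (fun i => ⟪p i - y, u i - v⟫_ℝ) l (𝓝 ⟪x - y, w - v⟫_ℝ) :=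
    (hp.sub tendsto_const_nhds).inner (hu.sub tendsto_const_nhds)
  exact ge_of_tendsto hlim (Eventually.of_forall fun i => hB.1 _ _ _ _ (hmem i) hv)

theorem MaximalMonotoneOp.exists_subseq_tendsto {B : E → Set E} (hB : MaximalMonotoneOp B)
    {p u : ℕ → E} {x : E} (hp : Tendsto p atTop (𝓝 x)) (hmem : ∀ j, u j ∈ B (p j))
    {M : ℝ} (hM : ∀ j, ‖u j‖ ≤ M) :
    ∃ w ∈ B x, ∃ φ : ℕ → ℕ, StrictMono φ ∧ Tendsto (u ∘ φ) atTop (𝓝 w) := by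
  have hball : ∀ j, u j ∈ Metric.closedBall (0 : E) M := by simpa using hM
  obtain ⟨w, -, φ, hφ, hw⟩ := tendsto_subseq_of_bounded Metric.isBounded_closedBall hball
  exact ⟨w, hB.mem_of_tendsto (hp.comp hφ.tendsto_atTop) hw fun k => hmem (φ k), φ, hφ, hw⟩

theorem tendsto_pow_smul_add_one_sub_pow_smul {θ : ℝ} (hθ : θ ∈ Set.Ioo (0 : ℝ) 1) (x y : E) :
    Tendsto (fun j : ℕ => θ ^ j • y + (1 - θ ^ j) • x) atTop (𝓝 x) := by
  have hcont : Continuous fun t : ℝ => t • y + (1 - t) • x := by fun_prop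
  simpa [Function.comp_def] using (hcont.tendsto 0).comp (tendsto_pow_atTop_nhds_zero_of_lt_one hθ.1.le hθ.2)

theorem MonotoneOp.inv_mul_norm_sq_le_inner {B : E → Set E} (hB : MonotoneOp B) {β : ℝ}
    (hβ : β ≠ 0) {a x Jx w : E} (hJ : β⁻¹ • (x - β • a - Jx) ∈ B Jx) (hw : w ∈ B x) :
    β⁻¹ * ‖x - Jx‖ ^ 2 ≤ ⟪a + w, x - Jx⟫_ℝ := by
  have hsplit : a + w = β⁻¹ • (x - Jx) + (w - β⁻¹ • (x - β • a - Jx)) := by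
    match_scalars <;> field_simp <;> ring
  rw [hsplit, inner_add_left, real_inner_smul_left, real_inner_self_eq_norm_sq,
    real_inner_comm]
  linarith [hB x Jx w _ hw hJ]

end

theorem linesearch_terminates_general
    (n : ℕ) (A : EuclideanSpace ℝ (Fin n) → EuclideanSpace ℝ (Fin n))
    (B : EuclideanSpace ℝ (Fin n) → Set (EuclideanSpace ℝ (Fin n)))
    (hAc : Continuous A) (hB : MaximalMonotoneOp B)
    (β δ θ : ℝ) (hβ : 0 < β) (hδ : δ ∈ Set.Ioo (0:ℝ) 1) (hθ : θ ∈ Set.Ioo (0:ℝ) 1)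
    (x Jx : EuclideanSpace ℝ (Fin n))
    (hJ : β⁻¹ • (x - β • A x - Jx) ∈ B Jx)
    (hne : x ≠ Jx)
    (u : ℕ → EuclideanSpace ℝ (Fin n))
    (hu : ∀ j : ℕ, u j ∈ B (θ ^ j • Jx + (1 - θ ^ j) • x))
    (hbd : ∃ M : ℝ, ∀ j : ℕ, ‖u j‖ ≤ M) :
    ∃ j : ℕ,
      ⟪A (θ ^ j • Jx + (1 - θ ^ j) • x) + u j, x - Jx⟫_ℝ ≥ (δ / β) * ‖x - Jx‖ ^ 2 := by
  by_contra! hfail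
  obtain ⟨M, hM⟩ := hbd
  have hp := tendsto_pow_smul_add_one_sub_pow_smul hθ x Jx
  obtain ⟨w, hw, φ, hφ, huw⟩ := hB.exists_subseq_tendsto hp hu hM
  have hlim : Tendsto (fun k => ⟪A (θ ^ φ k • Jx + (1 - θ ^ φ k) • x) + u (φ k), x - Jx⟫_ℝ)
      atTop (𝓝 ⟪A x + w, x - Jx⟫_ℝ) :=
    (((hAc.tendsto x).comp (hp.comp hφ.tendsto_atTop)).add huw).inner tendsto_const_nhds
  have hupper : ⟪A x + w, x - Jx⟫_ℝ ≤ (δ / β) * ‖x - Jx‖ ^ 2 :=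
    le_of_tendsto hlim (Eventually.of_forall fun k => (hfail (φ k)).le)
  have hlower := hB.1.inv_mul_norm_sq_le_inner hβ.ne' hJ hw
  have hd : 0 < ‖x - Jx‖ ^ 2 := by
    have := norm_pos_iff.mpr (sub_ne_zero.mpr hne)
    positivity
  have hδβ : δ / β < β⁻¹ := by
    rw [div_eq_mul_inv]; exact mul_lt_of_lt_one_left (inv_pos.mpr hβ) hδ.2
  linarith [mul_lt_mul_of_pos_right hδβ hd]

/-- The Armijo-type linesearch terminates after finitely many steps. -/
theorem linesearch_terminates
    (n : ℕ) (A : EuclideanSpace ℝ (Fin n) → EuclideanSpace ℝ (Fin n))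
    (B : EuclideanSpace ℝ (Fin n) → Set (EuclideanSpace ℝ (Fin n)))
    (hAc : Continuous A) (hA : MonotoneMap A) (hB : MaximalMonotoneOp B)
    (β δ θ : ℝ) (hβ : 0 < β) (hδ : δ ∈ Set.Ioo (0:ℝ) 1) (hθ : θ ∈ Set.Ioo (0:ℝ) 1)
    (x Jx : EuclideanSpace ℝ (Fin n))
    (hJ : β⁻¹ • (x - β • A x - Jx) ∈ B Jx)
    (hne : x ≠ Jx)
    (u : ℕ → EuclideanSpace ℝ (Fin n))
    (hu : ∀ j : ℕ, u j ∈ B (θ ^ j • Jx + (1 - θ ^ j) • x))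
    (hbd : ∃ M : ℝ, ∀ j : ℕ, ‖u j‖ ≤ M) :
    ∃ j : ℕ,
      ⟪A (θ ^ j • Jx + (1 - θ ^ j) • x) + u j, x - Jx⟫_ℝ ≥ (δ / β) * ‖x - Jx‖ ^ 2 :=
  linesearch_terminates_general n A B hAc hB β δ θ hβ hδ hθ x Jx hJ hne u hu hbd
end

section
/- Let A : ℝⁿ → ℝⁿ be monotone and B : ℝⁿ → 2^{ℝⁿ} maximal monotone with resolvent J(x,β) = (I + βB)^{-1}((I − βA)(x)) for β > 0. Let x̃ ∈ ℝⁿ, β̃ > 0, δ ∈ (0,1), and ũ ∈ B(x̃). If ⟨A(x̃) + ũ, x̃ − J(x̃,β̃)⟩ ≤ (δ/β̃)‖x̃ − J(x̃,β̃)‖², then x̃ = J(x̃,β̃), and hence 0 ∈ A(x̃) + B(x̃). -/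
open InnerProductSpace

/-- If the linesearch inequality fails at `x̃`, then `x̃` is a fixed point of the
forward-backward operator, hence a solution. -/
theorem fixedPoint_of_linesearch_inequality
    (n : ℕ) (A : EuclideanSpace ℝ (Fin n) → EuclideanSpace ℝ (Fin n))
    (B : EuclideanSpace ℝ (Fin n) → Set (EuclideanSpace ℝ (Fin n)))
    (hA : MonotoneMap A) (hB : MaximalMonotoneOp B)
    (βt δ : ℝ) (hβ : 0 < βt) (hδ : δ ∈ Set.Ioo (0:ℝ) 1)
    (xt Jxt ut : EuclideanSpace ℝ (Fin n))
    (hJ : βt⁻¹ • (xt - βt • A xt - Jxt) ∈ B Jxt)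
    (hut : ut ∈ B xt)
    (hineq : ⟪A xt + ut, xt - Jxt⟫_ℝ ≤ (δ / βt) * ‖xt - Jxt‖ ^ 2) :
    xt = Jxt ∧ (0 : EuclideanSpace ℝ (Fin n)) ∈ (fun v => A xt + v) '' (B xt) := by
  set v := βt⁻¹ • (xt - βt • A xt - Jxt) with hv
  have hvB : v = βt⁻¹ • (xt - Jxt) - A xt := by
    rw [hv]
    match_scalars <;> field_simp
  have hmono := hB.1 xt Jxt ut v hut hJ
  -- 0 ≤ ⟪xt - Jxt, ut - v⟫
  have hexp : ⟪xt - Jxt, ut - v⟫_ℝ =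
      ⟪xt - Jxt, ut⟫_ℝ - βt⁻¹ * ‖xt - Jxt‖ ^ 2 + ⟪xt - Jxt, A xt⟫_ℝ := by
    rw [hvB, inner_sub_right, inner_sub_right, real_inner_smul_right,
      real_inner_self_eq_norm_sq]
    ring
  have hsum : ⟪A xt + ut, xt - Jxt⟫_ℝ =
      ⟪xt - Jxt, A xt⟫_ℝ + ⟪xt - Jxt, ut⟫_ℝ := by
    rw [inner_add_left, real_inner_comm (A xt), real_inner_comm ut]
  have key : βt⁻¹ * ‖xt - Jxt‖ ^ 2 ≤ (δ / βt) * ‖xt - Jxt‖ ^ 2 := by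
    rw [hexp] at hmono
    nlinarith [hmono, hineq, hsum]
  have hn : ‖xt - Jxt‖ ^ 2 = 0 := by
    rcases hδ with ⟨hδ0, hδ1⟩
    rw [div_eq_mul_inv] at key
    by_contra h
    have hpos : 0 < ‖xt - Jxt‖ ^ 2 := lt_of_le_of_ne (sq_nonneg _) (Ne.symm h)
    nlinarith [mul_pos (mul_pos (sub_pos.mpr hδ1) (inv_pos.mpr hβ)) hpos]
  have hxt : xt = Jxt := by
    have h1 := pow_eq_zero_iff (n := 2) (M₀ := ℝ) (by norm_num) |>.mp hn
    exact sub_eq_zero.mp (norm_eq_zero.mp h1)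
  refine ⟨hxt, ⟨v, ?_, ?_⟩⟩
  · rw [hxt]; exact hJ
  · simp only []
    rw [hvB, hxt, sub_self, smul_zero, zero_sub]
    abel
end
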